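/- If a pair of node sequences (φ_AD^{m,(k+1,ℓ+1)})_{m=1}^M, (ψ^m)_{m=1}^M satisfies the CISDCQ diffusion and reaction updates at every node m+1 (0 ≤ m ≤ M−1) and is stationary in the inner iteration, i.e. φ^{m,(k+1,ℓ+1)} = φ^{m,(k+1,ℓ)} = ψ^m for all m = 1,…,M (with ψ^0 := φ^0), then: (i) ψ^{m+1} = φ_AD^{m+1,(k+1,ℓ+1)} for every m, i.e. the diffusion and reaction updates coincide; and (ii) ψ satisfies the fully coupled implicit (IMEX-type) sweep update: for every m = 0,…,M−1, ψ^{m+1} = φ^0 + Δt Σ_{j=1}^{m} q̃^E_{m+1,j}[F_A(ψ^j) − F_A(φ^{j,(k)})] + Δt Σ_{j=1}^{m} q̃^I_{m+1,j}[F_D(ψ^j) − F_D(φ^{j,(k)}) + F_R(ψ^j) − F_R(φ^{j,(k)})] + Δt q̃^I_{m+1,m+1}[F_D(ψ^{m+1}) − F_D(φ^{m+1,(k)}) + F_R(ψ^{m+1}) − F_R(φ^{m+1,(k)})] + Δt Q^{0:m+1}(F(φ^{(k)})). -/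
import Mathlib


open Finset

/-- If a pair of node sequences satisfies the CISDCQ diffusion and reaction
updates at every node and is stationary in the inner iteration, then (i) the diffusion and
reaction updates coincide, and (ii) the sequence satisfies the fully coupled implicit
(IMEX-type) sweep update. -/
theorem cisdcq_stationary_inner_iteration_is_fully_coupled
    (M d : ℕ) (hM : 1 ≤ M)
    (Δt : ℝ) (hΔt : 0 < Δt)
    (t : ℕ → ℝ)
    (ht : ∀ i, i < M → t i < t (i + 1))
    (htM : t M = t 0 + Δt)
    (q : ℕ → ℕ → ℝ)
    (hq : ∀ m j, m ≤ M → j ≤ M → q m j =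
      (1 / Δt) * ∫ τ in (t 0)..(t m),
        Polynomial.eval τ (Lagrange.basis (Finset.range (M + 1)) t j))
    (qI qE : ℕ → ℕ → ℝ)
    (FA FD FR : (Fin d → ℝ) → (Fin d → ℝ))
    (φ0 : Fin d → ℝ)
    -- previous sweep iterate
    (φk : ℕ → (Fin d → ℝ)) (hφk0 : φk 0 = φ0)
    -- stationary inner iterate: φ^{m,(k+1,ℓ+1)} = φ^{m,(k+1,ℓ)} = ψ^m, with ψ^0 = φ^0
    (ψ : ℕ → (Fin d → ℝ)) (hψ0 : ψ 0 = φ0)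
    -- diffusion outputs
    (φAD : ℕ → (Fin d → ℝ))
    -- the CISDCQ diffusion update at every node (with stationary inner iterates)
    (hD : ∀ m, m + 1 ≤ M → φAD (m + 1) = φ0
      + Δt • (∑ j ∈ Icc 1 (m - 1), qE (m + 1) j • (FA (ψ j) - FA (φk j)))
      + Δt • (∑ j ∈ Icc 1 (m - 1), qI (m + 1) j •
          (FD (ψ j) - FD (φk j) + FR (ψ j) - FR (φk j)))
      + (Δt * qE (m + 1) m) • (FA (ψ m) - FA (φk m))
      + (Δt * qI (m + 1) m) • (FD (ψ m) - FD (φk m) + FR (ψ m) - FR (φk m))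
      + (Δt * qI (m + 1) (m + 1)) •
          (FD (φAD (m + 1)) - FD (φk (m + 1)) + FR (ψ (m + 1)) - FR (φk (m + 1)))
      + Δt • (∑ j ∈ Finset.range (M + 1), q (m + 1) j •
          (FA (φk j) + FD (φk j) + FR (φk j))))
    -- the CISDCQ reaction update at every node (with stationary inner iterates)
    (hR : ∀ m, m + 1 ≤ M → ψ (m + 1) = φ0
      + Δt • (∑ j ∈ Icc 1 (m - 1), qE (m + 1) j • (FA (ψ j) - FA (φk j)))
      + Δt • (∑ j ∈ Icc 1 (m - 1), qI (m + 1) j •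
          (FD (ψ j) - FD (φk j) + FR (ψ j) - FR (φk j)))
      + (Δt * qE (m + 1) m) • (FA (ψ m) - FA (φk m))
      + (Δt * qI (m + 1) m) • (FD (ψ m) - FD (φk m) + FR (ψ m) - FR (φk m))
      + (Δt * qI (m + 1) (m + 1)) •
          (FD (φAD (m + 1)) - FD (φk (m + 1)) + FR (ψ (m + 1)) - FR (φk (m + 1)))
      + Δt • (∑ j ∈ Finset.range (M + 1), q (m + 1) j •
          (FA (φk j) + FD (φk j) + FR (φk j)))) :
    -- (i) diffusion and reaction updates coincide
    (∀ m, m + 1 ≤ M → ψ (m + 1) = φAD (m + 1)) ∧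
    -- (ii) ψ satisfies the fully coupled implicit (IMEX-type) sweep update
    (∀ m, m + 1 ≤ M → ψ (m + 1) = φ0
      + Δt • (∑ j ∈ Icc 1 m, qE (m + 1) j • (FA (ψ j) - FA (φk j)))
      + Δt • (∑ j ∈ Icc 1 m, qI (m + 1) j •
          (FD (ψ j) - FD (φk j) + FR (ψ j) - FR (φk j)))
      + (Δt * qI (m + 1) (m + 1)) •
          (FD (ψ (m + 1)) - FD (φk (m + 1)) + FR (ψ (m + 1)) - FR (φk (m + 1)))
      + Δt • (∑ j ∈ Finset.range (M + 1), q (m + 1) j •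
          (FA (φk j) + FD (φk j) + FR (φk j)))) := by

  have hEq : ∀ m, m + 1 ≤ M → ψ (m + 1) = φAD (m + 1) := fun m hm =>
    (hR m hm).trans (hD m hm).symm
  refine ⟨hEq, fun m hm => ?_⟩
  have h := hR m hm
  rw [← hEq m hm] at h
  cases m with
  | zero =>
    have e1 : ψ 0 = φk 0 := by rw [hψ0, hφk0]
    rw [e1] at h
    nth_rewrite 1 [h]
    simp only [sub_self, zero_add, smul_zero, add_zero]
  | succ n =>
    have hsplit : ∀ f : ℕ → (Fin d → ℝ),
        ∑ j ∈ Icc 1 (n + 1), f j = (∑ j ∈ Icc 1 n, f j) + f (n + 1) := fun f =>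
      Finset.sum_Icc_succ_top (Nat.le_add_left 1 n) f
    rw [hsplit, hsplit, smul_add, smul_add] at *
    nth_rewrite 1 [h]
    simp only [Nat.add_sub_cancel, smul_smul]
    abel
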